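/- arXiv:1511.03568 — 6 statements merged into one kernel-verified Lean document; each statement's English description precedes it below -/
import Mathlib

section
/- Let G be an undirected graph (a finite connected loopless multigraph) and let f be a divisor on G. Then rank(f) − rank(K_G − f) = deg(f) − g + 1, where g = m(G) − |V(G)| + 1 is the genus of G (m(G) denoting the number of undirected edges) and K_G is the canonical divisor defined by K_G(v) = d(v) − 2 for each vertex v. -/
open Finset

variable {V : Type} [Fintype V] [DecidableEq V]

/-- The outdegree of a vertex `v` in the multidigraph with multiplicity function `m`
(`m u v` is the number of directed edges from `u` to `v`). -/
def outdeg (m : V → V → ℕ) (v : V) : ℤ := ∑ u, (m v u : ℤ)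

/-- The indegree of a vertex. -/
def indeg (m : V → V → ℕ) (v : V) : ℤ := ∑ u, (m u v : ℤ)

/-- The digraph is loopless. -/
def Loopless (m : V → V → ℕ) : Prop := ∀ v, m v v = 0

/-- The digraph is strongly connected: every vertex reaches every vertex on a directed path. -/
def StronglyConnected (m : V → V → ℕ) : Prop :=
  ∀ u v : V, Relation.ReflTransGen (fun a b => 0 < m a b) u v

/-- Firing vertex `v` in chip-distribution `x`: `v` sends a chip along each outgoing edge. -/
def fire (m : V → V → ℕ) (x : V → ℤ) (v : V) : V → ℤ :=
  fun u => x u + (m v u : ℤ) - (if u = v then outdeg m v else 0)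

/-- The degree (total number of chips) of a chip-distribution / divisor. -/
def degSum (x : V → ℤ) : ℤ := ∑ v, x v

/-- The state of the chip-firing game after `n` steps, starting from `x` and
firing the vertices `s 0, s 1, …` in this order. -/
def gameState (m : V → V → ℕ) (x : V → ℤ) (s : ℕ → V) : ℕ → (V → ℤ)
  | 0 => x
  | n + 1 => fire m (gameState m x s n) (s n)

/-- `s` encodes an infinite legal chip-firing game starting from `x`:
at each step the fired vertex is active. -/
def InfGame (m : V → V → ℕ) (x : V → ℤ) (s : ℕ → V) : Prop :=
  ∀ n, outdeg m (s n) ≤ gameState m x s n (s n)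

/-- A chip-distribution is terminating if no infinite legal game starts from it. -/
def Terminating (m : V → V → ℕ) (x : V → ℤ) : Prop :=
  ¬ ∃ s : ℕ → V, InfGame m x s

/-- The Laplacian of the digraph applied to `z`. -/
def lap (m : V → V → ℕ) (z : V → ℤ) : V → ℤ :=
  fun u => (∑ v, (m v u : ℤ) * z v) - outdeg m u * z u

/-- Linear equivalence: `x ∼ y` iff `x = y + L z` for some integer vector `z`. -/
def LinEquiv (m : V → V → ℕ) (x y : V → ℤ) : Prop :=
  ∃ z : V → ℤ, x = y + lap m z

/-- A divisor is equi-effective if it is linearly equivalent to an effective divisor. -/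
def EquiEffective (m : V → V → ℕ) (f : V → ℤ) : Prop :=
  ∃ g : V → ℤ, 0 ≤ g ∧ LinEquiv m f g

/-- The rank of a divisor `f`:
`min {deg g - 1 : g ≥ 0 and f - g is not equi-effective}`. -/
noncomputable def divRank (m : V → V → ℕ) (f : V → ℤ) : ℤ :=
  sInf {d : ℤ | ∃ g : V → ℤ, 0 ≤ g ∧ degSum g - 1 = d ∧ ¬ EquiEffective m (f - g)}

/-!
Baker–Norine's argument via acyclic orientations. An injective labelling `t` of the vertices
orients every edge towards its endpoint with the larger label; let `ν_t = indeg - 1`. No `ν_t`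
is equivalent to an effective divisor, and reversing the labels gives `ν_{-t} = K - ν_t`.
Conversely, if `f` is not equivalent to an effective divisor, run Dhar's burning algorithm from
`q` on a `q`-reduced representative `f₀ ∼ f`: the order in which the vertices burn is a
labelling with `f₀ ≤ ν_t`. Together these give `rank f + 1 = min {deg (f' - ν_t)⁺ | f' ∼ f, t}`,
and since `x⁺ - (-x)⁺ = x`, the substitution `(f', t) ↦ (K - f', -t)` matches the minima for
`f` and `K - f` up to the shift `deg f - g + 1`.
-/

section Laplacian

variable {V : Type} [Fintype V] {m : V → V → ℕ}

def lapHom (m : V → V → ℕ) : (V → ℤ) →+ (V → ℤ) where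
  toFun := lap m
  map_zero' := by funext u; simp [lap]
  map_add' y z := by
    funext u
    simp only [lap, Pi.add_apply, mul_add, Finset.sum_add_distrib]
    ring

@[simp] lemma lapHom_apply (z : V → ℤ) : lapHom m z = lap m z := rfl

lemma lap_add (y z : V → ℤ) : lap m (y + z) = lap m y + lap m z := map_add (lapHom m) y z

lemma lap_zsmul (a : ℤ) (z : V → ℤ) : lap m (a • z) = a • lap m z := map_zsmul (lapHom m) a z

lemma lap_sum {ι : Type*} (s : Finset ι) (z : ι → V → ℤ) :
    lap m (∑ i ∈ s, z i) = ∑ i ∈ s, lap m (z i) :=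
  map_sum (lapHom m) z s

lemma lap_indicator [DecidableEq V] (S : Finset V) (u : V) :
    lap m (fun x => if x ∈ S then 1 else 0) u
      = ∑ x ∈ S, (m x u : ℤ) - if u ∈ S then outdeg m u else 0 := by
  simp only [lap, mul_ite, mul_one, mul_zero, Finset.sum_ite_mem, Finset.univ_inter]

lemma outdeg_eq_indeg (hsym : ∀ u v, m u v = m v u) (v : V) : outdeg m v = indeg m v :=
  Finset.sum_congr rfl fun u _ => by rw [hsym]

lemma lap_eq_sum_mul_sub (hsym : ∀ u v, m u v = m v u) (z : V → ℤ) (u : V) :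
    lap m z u = ∑ v, (m v u : ℤ) * (z v - z u) := by
  simp only [lap, outdeg_eq_indeg hsym, indeg, mul_sub, Finset.sum_sub_distrib, Finset.sum_mul]

lemma sum_lap_mul_comm (hsym : ∀ u v, m u v = m v u) (x y : V → ℤ) :
    ∑ v, lap m x v * y v = ∑ v, x v * lap m y v := by
  simp only [lap, sub_mul, mul_sub, Finset.sum_sub_distrib, Finset.sum_mul, Finset.mul_sum]
  congr 1
  · rw [Finset.sum_comm]
    exact Finset.sum_congr rfl fun v _ => Finset.sum_congr rfl fun u _ => by rw [hsym]; ring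
  · exact Finset.sum_congr rfl fun v _ => by ring

lemma degSum_add (x y : V → ℤ) : degSum (x + y) = degSum x + degSum y :=
  Finset.sum_add_distrib

lemma degSum_sub (x y : V → ℤ) : degSum (x - y) = degSum x - degSum y :=
  Finset.sum_sub_distrib ..

lemma degSum_mono {x y : V → ℤ} (h : x ≤ y) : degSum x ≤ degSum y :=
  Finset.sum_le_sum fun v _ => h v

lemma degSum_posPart_neg (x : V → ℤ) : degSum (-x)⁺ = degSum x⁺ - degSum x := by
  have h := congrArg degSum (posPart_sub_negPart x)
  rw [degSum_sub] at h
  rw [posPart_neg]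
  linarith

lemma degSum_lap (z : V → ℤ) : degSum (lap m z) = 0 := by
  simp only [degSum, lap, Finset.sum_sub_distrib, outdeg, Finset.sum_mul]
  rw [Finset.sum_comm, sub_self]

end Laplacian

section LinearEquivalence

variable {V : Type} [Fintype V] {m : V → V → ℕ} {f g h : V → ℤ}

lemma linEquiv_iff_sub_mem_range : LinEquiv m f g ↔ f - g ∈ (lapHom m).range := by
  simp only [LinEquiv, AddMonoidHom.mem_range, lapHom_apply, eq_comm (b := f - g),
    sub_eq_iff_eq_add']

lemma LinEquiv.refl (f : V → ℤ) : LinEquiv m f f :=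
  linEquiv_iff_sub_mem_range.2 (by simp)

lemma linEquiv_add_lap (f z : V → ℤ) : LinEquiv m (f + lap m z) f := ⟨z, rfl⟩

lemma LinEquiv.symm (hfg : LinEquiv m f g) : LinEquiv m g f := by
  rw [linEquiv_iff_sub_mem_range, ← neg_sub]
  exact neg_mem (linEquiv_iff_sub_mem_range.1 hfg)

lemma LinEquiv.trans (hfg : LinEquiv m f g) (hgh : LinEquiv m g h) : LinEquiv m f h := by
  rw [linEquiv_iff_sub_mem_range, ← sub_add_sub_cancel f g h]
  exact add_mem (linEquiv_iff_sub_mem_range.1 hfg) (linEquiv_iff_sub_mem_range.1 hgh)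

lemma LinEquiv.sub_left (hfg : LinEquiv m f g) (a : V → ℤ) : LinEquiv m (a - f) (a - g) := by
  rw [linEquiv_iff_sub_mem_range, sub_sub_sub_cancel_left]
  exact linEquiv_iff_sub_mem_range.1 hfg.symm

lemma LinEquiv.sub_right (hfg : LinEquiv m f g) (a : V → ℤ) : LinEquiv m (f - a) (g - a) := by
  rwa [linEquiv_iff_sub_mem_range, sub_sub_sub_cancel_right, ← linEquiv_iff_sub_mem_range]

lemma LinEquiv.degSum_eq (hfg : LinEquiv m f g) : degSum f = degSum g := by
  obtain ⟨z, rfl⟩ := hfg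
  rw [degSum_add, degSum_lap, add_zero]

lemma EquiEffective.of_nonneg (hf : 0 ≤ f) : EquiEffective m f :=
  ⟨f, hf, LinEquiv.refl f⟩

lemma EquiEffective.of_linEquiv (hfg : LinEquiv m f g) (hg : EquiEffective m g) :
    EquiEffective m f :=
  let ⟨e, he, hge⟩ := hg
  ⟨e, he, hfg.trans hge⟩

lemma EquiEffective.add (hf : EquiEffective m f) (hg : EquiEffective m g) :
    EquiEffective m (f + g) := by
  obtain ⟨a, ha, y, rfl⟩ := hf
  obtain ⟨b, hb, z, rfl⟩ := hg
  refine ⟨a + b, add_nonneg ha hb, y + z, ?_⟩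
  rw [lap_add]
  abel

end LinearEquivalence

section Orientations

variable {V : Type} [Fintype V] {m : V → V → ℕ} {t : V → ℤ}

def canonical (m : V → V → ℕ) : V → ℤ := fun v => outdeg m v - 2

/-- `ν_O = indeg_O - 1` for the acyclic orientation `O` in which every edge points towards its
endpoint with the larger label `t`; for injective `t` every acyclic orientation arises so. -/
def orientDiv (m : V → V → ℕ) (t : V → ℤ) : V → ℤ :=
  fun v => (∑ u, if t u < t v then (m u v : ℤ) else 0) - 1

lemma degSum_canonical {mG : ℕ} (hmG : 2 * mG = ∑ u, ∑ v, m u v) :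
    degSum (canonical m) = 2 * mG - 2 * Fintype.card V := by
  simp only [degSum, canonical, outdeg, Finset.sum_sub_distrib, Finset.sum_const,
    Finset.card_univ, nsmul_eq_mul]
  norm_num [← Nat.cast_sum, ← hmG]
  ring

lemma sum_ite_lt_add_sum_ite_gt (hloop : Loopless m) (ht : t.Injective) (v : V) :
    ((∑ u, if t u < t v then (m u v : ℤ) else 0) + ∑ u, if t v < t u then (m u v : ℤ) else 0)
      = indeg m v := by
  rw [← Finset.sum_add_distrib]
  refine Finset.sum_congr rfl fun u _ => ?_
  rcases lt_trichotomy (t u) (t v) with h | h | h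
  · simp [h, h.not_gt]
  · obtain rfl := ht h
    simp [hloop u]
  · simp [h, h.not_gt]

lemma orientDiv_neg (hsym : ∀ u v, m u v = m v u) (hloop : Loopless m) (ht : t.Injective) :
    orientDiv m (-t) = canonical m - orientDiv m t := by
  funext v
  have hsplit := sum_ite_lt_add_sum_ite_gt hloop ht v
  simp only [orientDiv, canonical, Pi.neg_apply, Pi.sub_apply, neg_lt_neg_iff,
    outdeg_eq_indeg hsym]
  linarith

lemma degSum_orientDiv (hsym : ∀ u v, m u v = m v u) (hloop : Loopless m) (ht : t.Injective)
    {mG : ℕ} (hmG : 2 * mG = ∑ u, ∑ v, m u v) :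
    degSum (orientDiv m t) = mG - Fintype.card V := by
  have hrev : degSum (orientDiv m (-t)) = degSum (orientDiv m t) := by
    simp only [degSum, orientDiv, Pi.neg_apply, neg_lt_neg_iff, Finset.sum_sub_distrib]
    rw [Finset.sum_comm]
    exact congrArg (· - _) <| Finset.sum_congr rfl fun v _ =>
      Finset.sum_congr rfl fun u _ => by rw [hsym]
  have hK := degSum_canonical hmG
  rw [orientDiv_neg hsym hloop ht, degSum_sub] at hrev
  linarith

lemma exists_orientDiv_lt_lap [Nonempty V] (hsym : ∀ u v, m u v = m v u) (t z : V → ℤ) :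
    ∃ v, orientDiv m t v < lap m z v := by
  -- a vertex minimising `z`, and among those `t`, gains from each lower neighbour
  obtain ⟨v, -, hv⟩ :=
    Finset.univ.exists_min_image (fun v => toLex (z v, t v)) Finset.univ_nonempty
  refine ⟨v, ?_⟩
  suffices (∑ u, if t u < t v then (m u v : ℤ) else 0) ≤ ∑ u, (m u v : ℤ) * (z u - z v) by
    rw [orientDiv, lap_eq_sum_mul_sub hsym]
    linarith
  refine Finset.sum_le_sum fun u _ => ?_
  have hvu := Prod.Lex.le_iff.1 (hv u (Finset.mem_univ u))
  simp only [ofLex_toLex] at hvu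
  split_ifs with htu
  · have : 1 ≤ z u - z v := by
      rcases hvu with h | ⟨_, h⟩
      · omega
      · exact absurd htu h.not_gt
    nlinarith
  · have : 0 ≤ z u - z v := by omega
    positivity

lemma not_equiEffective_orientDiv [Nonempty V] (hsym : ∀ u v, m u v = m v u) (t : V → ℤ) :
    ¬ EquiEffective m (orientDiv m t) := by
  rintro ⟨e, he, z, hz⟩
  obtain ⟨v, hv⟩ := exists_orientDiv_lt_lap hsym t z
  have hzv := congrFun hz v
  have hev := he v
  simp only [Pi.add_apply, Pi.zero_apply] at hzv hev
  omega

lemma not_equiEffective_and_orientDiv_sub [Nonempty V] (hsym : ∀ u v, m u v = m v u)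
    {x : V → ℤ} (hx : EquiEffective m x)
    (hνx : EquiEffective m (orientDiv m t - x)) : False :=
  not_equiEffective_orientDiv hsym t (by simpa using hx.add hνx)

end Orientations

section ReducedDivisors

variable {V : Type} [Fintype V] {m : V → V → ℕ} {f : V → ℤ}

lemma exists_lap_pos_off {q v : V} (hqv : Relation.ReflTransGen (fun a b => 0 < m a b) q v) :
    ∃ z : V → ℤ, (∀ u, u ≠ q → 0 ≤ lap m z u) ∧ (v ≠ q → 1 ≤ lap m z v) := by
  classical
  induction hqv with
  | refl => exact ⟨0, fun u _ => by simp [lap], fun h => absurd rfl h⟩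
  | @tail b c _ hbc ih =>
    obtain ⟨z, hz, hzb⟩ := ih
    by_cases hcb : c = b
    · exact ⟨z, hz, hcb ▸ hzb⟩
    -- firing `b` feeds `c`; scaling `z` by `outdeg b` repays what `b` loses
    have hb : 0 ≤ outdeg m b := Finset.sum_nonneg fun _ _ => Int.natCast_nonneg _
    set z' := outdeg m b • z + fun x => if x ∈ ({b} : Finset V) then 1 else 0
    have hlap : ∀ u,
        lap m z' u = outdeg m b * lap m z u + (m b u - if u = b then outdeg m b else 0) := by
      intro u
      rw [lap_add, lap_zsmul, Pi.add_apply, Pi.smul_apply, smul_eq_mul, lap_indicator]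
      by_cases hub : u = b <;> simp [hub]
    refine ⟨z', fun u hu => ?_, fun hcq => ?_⟩ <;> rw [hlap]
    · by_cases hub : u = b
      · subst hub
        have := hzb hu
        simp only [if_true]
        nlinarith [Int.natCast_nonneg (m u u)]
      · simp only [hub, if_false]
        nlinarith [hz u hu, Int.natCast_nonneg (m b u)]
    · simp only [hcb, if_false]
      have : (1 : ℤ) ≤ m b c := by exact_mod_cast hbc
      nlinarith [hz c hcq]

lemma exists_le_lap_off (hconn : StronglyConnected m) (h : V → ℤ) (q : V) :
    ∃ z : V → ℤ, ∀ v, v ≠ q → h v ≤ lap m z v := by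
  choose zs hzs_nonneg hzs_pos using fun v => exists_lap_pos_off (hconn q v)
  refine ⟨∑ v, (h v)⁺ • zs v, fun u hu => ?_⟩
  rw [lap_sum, Finset.sum_apply]
  simp only [lap_zsmul, Pi.smul_apply, smul_eq_mul]
  calc h u ≤ (h u)⁺ := le_posPart _
    _ ≤ (h u)⁺ * lap m (zs u) u := le_mul_of_one_le_right (posPart_nonneg _) (hzs_pos u hu)
    _ ≤ ∑ v, (h v)⁺ * lap m (zs v) u :=
      Finset.single_le_sum (fun v _ => mul_nonneg (posPart_nonneg _) (hzs_nonneg v u hu))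
        (Finset.mem_univ u)

lemma exists_potential (hsym : ∀ u v, m u v = m v u) (hconn : StronglyConnected m) (q : V) :
    ∃ w : V → ℤ, w q = 0 ∧ 0 ≤ w ∧ ∀ v, v ≠ q → lap m w v < 0 := by
  obtain ⟨z, hz⟩ := exists_le_lap_off hconn 1 q
  obtain ⟨p, -, hp⟩ := Finset.univ.exists_max_image z ⟨q, Finset.mem_univ q⟩
  -- maximum principle: `lap z ≤ 0` at a maximum of `z`
  obtain rfl : p = q := by
    by_contra hpq
    have h1 := hz p hpq
    have h2 : ∑ v, (m v p : ℤ) * (z v - z p) ≤ 0 := Finset.sum_nonpos fun v _ =>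
      mul_nonpos_of_nonneg_of_nonpos (Int.natCast_nonneg _)
        (sub_nonpos.2 (hp v (Finset.mem_univ v)))
    rw [Pi.one_apply, lap_eq_sum_mul_sub hsym] at h1
    omega
  refine ⟨fun v => z p - z v, sub_self _, fun v => sub_nonneg.2 (hp v (Finset.mem_univ v)),
    fun v hv => ?_⟩
  have h1 := hz v hv
  rw [Pi.one_apply, lap_eq_sum_mul_sub hsym] at h1
  rw [lap_eq_sum_mul_sub hsym, ← neg_pos, ← Finset.sum_neg_distrib]
  exact lt_of_lt_of_le one_pos (h1.trans_eq (Finset.sum_congr rfl fun u _ => by ring))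

lemma nonneg_add_lap_indicator_compl [DecidableEq V] (hsym : ∀ u v, m u v = m v u) {q : V}
    {B : Finset V} (hf : ∀ v, v ≠ q → 0 ≤ f v)
    (hfire : ∀ v ∉ B, ∑ u ∈ B, (m u v : ℤ) ≤ f v) :
    ∀ v, v ≠ q → 0 ≤ (f + lap m fun x => if x ∈ Bᶜ then 1 else 0) v := by
  intro v hv
  rw [Pi.add_apply, lap_indicator]
  by_cases hvB : v ∈ B
  · have : 0 ≤ ∑ u ∈ Bᶜ, (m u v : ℤ) := Finset.sum_nonneg fun _ _ => Int.natCast_nonneg _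
    simp only [Finset.mem_compl, hvB, not_true_eq_false, if_false]
    linarith [hf v hv]
  · have hsplit := Finset.sum_compl_add_sum B fun u => (m u v : ℤ)
    simp only [Finset.mem_compl, hvB, not_false_eq_true, if_true, outdeg_eq_indeg hsym, indeg]
    linarith [hfire v hvB]

lemma sum_lap_indicator_mul_neg [DecidableEq V] (hsym : ∀ u v, m u v = m v u) {w : V → ℤ}
    {q : V} (hw : ∀ v, v ≠ q → lap m w v < 0) {S : Finset V} (hS : S.Nonempty) (hqS : q ∉ S) :
    ∑ v, lap m (fun x => if x ∈ S then 1 else 0) v * w v < 0 := by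
  rw [sum_lap_mul_comm hsym]
  simp only [ite_mul, one_mul, zero_mul, Finset.sum_ite_mem, Finset.univ_inter]
  exact Finset.sum_neg (fun v hv => hw v (ne_of_mem_of_not_mem hv hqS)) hS

/-- A `q`-reduced representative: no proper set of vertices containing `q` lets its
complement fire without going into debt. -/
lemma exists_reduced_linEquiv (hsym : ∀ u v, m u v = m v u) (hconn : StronglyConnected m)
    (q : V) (hf : ¬ EquiEffective m f) :
    ∃ f₀, LinEquiv m f f₀ ∧ (∀ v, v ≠ q → 0 ≤ f₀ v) ∧ f₀ q < 0 ∧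
      ∀ B : Finset V, q ∈ B → B ≠ Finset.univ → ∃ v ∉ B, f₀ v < ∑ u ∈ B, (m u v : ℤ) := by
  classical
  obtain ⟨w, hwq, hw, hlapw⟩ := exists_potential hsym hconn q
  let Admissible : (V → ℤ) → Prop := fun f' => LinEquiv m f f' ∧ ∀ v, v ≠ q → 0 ≤ f' v
  have hbdd : ∀ p, (∃ f', Admissible f' ∧ ∑ v, f' v * w v = p) → 0 ≤ p := by
    rintro _ ⟨f', ⟨-, hf'⟩, rfl⟩
    refine Finset.sum_nonneg fun v _ => ?_
    by_cases hv : v = q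
    · simp [hv, hwq]
    · exact mul_nonneg (hf' v hv) (hw v)
  obtain ⟨z, hz⟩ := exists_le_lap_off hconn (-f) q
  obtain ⟨-, ⟨f₀, ⟨hff₀, hf₀⟩, rfl⟩, hmin⟩ := Int.exists_least_of_bdd ⟨0, hbdd⟩
    ⟨_, f + lap m z, ⟨(linEquiv_add_lap f z).symm,
      fun v hv => by simpa [neg_le_iff_add_nonneg, add_comm] using hz v hv⟩, rfl⟩
  have hq : f₀ q < 0 := by
    by_contra! hq
    refine hf (.of_linEquiv hff₀ (.of_nonneg fun v => ?_))
    by_cases hv : v = q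
    · exact hv ▸ hq
    · exact hf₀ v hv
  refine ⟨f₀, hff₀, hf₀, hq, fun B hqB hB => ?_⟩
  by_contra! hfire
  -- firing `Bᶜ` keeps `f₀` admissible but lowers the potential `∑ f₀ w`
  set f₁ := f₀ + lap m fun x => if x ∈ Bᶜ then 1 else 0
  have hf₁ : Admissible f₁ :=
    ⟨hff₀.trans (linEquiv_add_lap f₀ _).symm, nonneg_add_lap_indicator_compl hsym hf₀ hfire⟩
  have hdrop := sum_lap_indicator_mul_neg hsym hlapw
    (Finset.nonempty_iff_ne_empty.2 (by rwa [Ne, Finset.compl_eq_empty_iff]))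
    (by simpa using hqB)
  have hle := hmin _ ⟨f₁, hf₁, rfl⟩
  simp only [f₁, Pi.add_apply, add_mul, Finset.sum_add_distrib] at hle
  linarith

lemma exists_injective_insert_burning [DecidableEq V] {f₀ : V → ℤ} {q : V} {B : Finset V}
    {t : V → ℤ} (ht : t.Injective)
    (hB : ∀ x ∈ B, x ≠ q → f₀ x < ∑ u ∈ B with t u < t x, (m u x : ℤ))
    {v : V} (hvB : v ∉ B) (hv : f₀ v < ∑ u ∈ B, (m u v : ℤ)) :
    ∃ t' : V → ℤ, t'.Injective ∧
      ∀ x ∈ insert v B, x ≠ q → f₀ x < ∑ u ∈ insert v B with t' u < t' x, (m u x : ℤ) := by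
  obtain ⟨M, hM⟩ := (Set.finite_range t).bddAbove
  have htM : ∀ x, t x ≤ M := fun x => hM ⟨x, rfl⟩
  -- `v` burns right after `B`: give it a label above all others
  set t' := Function.update t v (M + 1)
  refine ⟨t', fun x y hxy => ?_, fun x hx hxq => ?_⟩
  · by_cases hx : x = v <;> by_cases hy : y = v <;>
      simp only [t', hx, hy, Function.update_self, Function.update_of_ne, Ne, not_false_eq_true]
        at hxy ⊢
    · linarith [htM y]
    · linarith [htM x]
    · exact ht hxy
  have hmono : ∀ s, s ⊆ (insert v B).filter (fun u => t' u < t' x) →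
      ∑ u ∈ s, (m u x : ℤ) ≤ ∑ u ∈ insert v B with t' u < t' x, (m u x : ℤ) :=
    fun s hs => Finset.sum_le_sum_of_subset_of_nonneg hs fun _ _ _ => Int.natCast_nonneg _
  rcases Finset.mem_insert.1 hx with rfl | hxB
  · refine hv.trans_le (hmono B fun u hu => ?_)
    have huv : u ≠ x := ne_of_mem_of_not_mem hu hvB
    simp [t', hu, huv, htM u]
  · have hxv : x ≠ v := ne_of_mem_of_not_mem hxB hvB
    refine (hB x hxB hxq).trans_le (hmono _ fun u hu => ?_)
    have hu' := Finset.mem_filter.1 hu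
    have huv : u ≠ v := ne_of_mem_of_not_mem hu'.1 hvB
    simpa [t', hu'.1, huv, hxv] using hu'.2

lemma exists_burning_order {f₀ : V → ℤ} {q : V} (hq : f₀ q < 0)
    (hburn : ∀ B : Finset V, q ∈ B → B ≠ Finset.univ → ∃ v ∉ B, f₀ v < ∑ u ∈ B, (m u v : ℤ)) :
    ∃ t : V → ℤ, t.Injective ∧ f₀ ≤ orientDiv m t := by
  let Burnable : Finset V → Prop := fun B => q ∈ B ∧ ∃ t : V → ℤ, t.Injective ∧
    ∀ x ∈ B, x ≠ q → f₀ x < ∑ u ∈ B with t u < t x, (m u x : ℤ)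
  classical
  have hq_burnable : Burnable {q} := by
    obtain ⟨t, ht⟩ := exists_injective_nat V
    exact ⟨Finset.mem_singleton_self q, (↑) ∘ t, Nat.cast_injective.comp ht, by simp⟩
  obtain ⟨B, hB, hmax⟩ := (Finset.univ.filter Burnable).exists_max_image Finset.card
    ⟨{q}, Finset.mem_filter.2 ⟨Finset.mem_univ _, hq_burnable⟩⟩
  obtain ⟨hqB, t, ht, htB⟩ := (Finset.mem_filter.1 hB).2
  obtain rfl : B = Finset.univ := by
    by_contra hBu
    obtain ⟨v, hvB, hv⟩ := hburn B hqB hBu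
    have hlarger := hmax (insert v B) (Finset.mem_filter.2 ⟨Finset.mem_univ _,
      Finset.mem_insert_of_mem hqB, exists_injective_insert_burning ht htB hvB hv⟩)
    rw [Finset.card_insert_of_notMem hvB] at hlarger
    omega
  refine ⟨t, ht, fun x => ?_⟩
  have hsum : 0 ≤ ∑ u, if t u < t x then (m u x : ℤ) else 0 :=
    Finset.sum_nonneg fun _ _ => by split_ifs <;> simp
  by_cases hxq : x = q
  · simp only [orientDiv, hxq] at hsum ⊢
    omega
  · have := htB x (Finset.mem_univ x) hxq
    rw [Finset.sum_filter] at this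
    simp only [orientDiv]
    omega

end ReducedDivisors

section RankFormula

variable {V : Type} [Fintype V] {m : V → V → ℕ} {f g : V → ℤ}

lemma exists_orientDiv_sub_equiEffective [Nonempty V] (hsym : ∀ u v, m u v = m v u)
    (hconn : StronglyConnected m) (hf : ¬ EquiEffective m f) :
    ∃ t : V → ℤ, t.Injective ∧ EquiEffective m (orientDiv m t - f) := by
  classical
  obtain ⟨f₀, hff₀, -, hq, hburn⟩ :=
    exists_reduced_linEquiv hsym hconn (Classical.arbitrary V) hf
  obtain ⟨t, ht, hf₀t⟩ := exists_burning_order hq hburn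
  exact ⟨t, ht, .of_linEquiv (hff₀.sub_left _) (.of_nonneg (sub_nonneg.2 hf₀t))⟩

def excessDegrees (m : V → V → ℕ) (f : V → ℤ) : Set ℤ :=
  {a | ∃ t : V → ℤ, t.Injective ∧ ∃ f', LinEquiv m f f' ∧ a = degSum (f' - orientDiv m t)⁺}

lemma exists_isLeast_excessDegrees (m : V → V → ℕ) (f : V → ℤ) :
    ∃ a, IsLeast (excessDegrees m f) a := by
  obtain ⟨t, ht⟩ := exists_injective_nat V
  obtain ⟨a, ha, hmin⟩ := Int.exists_least_of_bdd (P := (· ∈ excessDegrees m f))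
    ⟨0, fun _ ⟨_, _, _, _, ha⟩ => ha ▸ Finset.sum_nonneg fun v _ => posPart_nonneg _⟩
    ⟨_, (↑) ∘ t, Nat.cast_injective.comp ht, f, LinEquiv.refl f, rfl⟩
  exact ⟨a, ha, hmin⟩

lemma exists_not_equiEffective_sub_of_mem_excessDegrees [Nonempty V]
    (hsym : ∀ u v, m u v = m v u) {a : ℤ} (ha : a ∈ excessDegrees m f) :
    ∃ g, 0 ≤ g ∧ degSum g = a ∧ ¬ EquiEffective m (f - g) := by
  obtain ⟨t, -, f', hff', rfl⟩ := ha
  refine ⟨_, posPart_nonneg _, rfl, fun hfg => ?_⟩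
  -- `ν_t - (f' - g) = g - (f' - ν_t) ≥ 0` for `g = (f' - ν_t)⁺`
  refine not_equiEffective_and_orientDiv_sub (t := t) hsym hfg (.of_linEquiv
    ((hff'.sub_right _).sub_left _) (.of_nonneg ?_))
  rw [sub_sub_eq_add_sub, add_comm, add_sub_assoc, ← neg_sub f', ← sub_eq_add_neg, sub_nonneg]
  exact le_posPart _

lemma exists_mem_excessDegrees_le [Nonempty V] (hsym : ∀ u v, m u v = m v u)
    (hconn : StronglyConnected m) (hg : 0 ≤ g) (hfg : ¬ EquiEffective m (f - g)) :
    ∃ a ∈ excessDegrees m f, a ≤ degSum g := by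
  obtain ⟨t, ht, e, he, hfge⟩ := exists_orientDiv_sub_equiEffective hsym hconn hfg
  -- `f' = ν_t + g - e ∼ f` has `f' - ν_t = g - e ≤ g`
  have hf' : LinEquiv m f (orientDiv m t + g - e) := by
    simpa [sub_sub_cancel_left, sub_sub_eq_add_sub] using hfge.sub_left (orientDiv m t + g)
  refine ⟨_, ⟨t, ht, _, hf', rfl⟩, degSum_mono ?_⟩
  rw [add_sub_assoc, add_sub_cancel_left]
  exact (posPart_mono (sub_le_self g he)).trans_eq (posPart_eq_self.2 hg)

lemma divRank_eq_of_isLeast [Nonempty V] (hsym : ∀ u v, m u v = m v u)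
    (hconn : StronglyConnected m) {a : ℤ} (ha : IsLeast (excessDegrees m f) a) :
    divRank m f = a - 1 := by
  refine IsLeast.csInf_eq ⟨?_, ?_⟩
  · obtain ⟨g, hg, hdeg, hfg⟩ := exists_not_equiEffective_sub_of_mem_excessDegrees hsym ha.1
    exact ⟨g, hg, by rw [hdeg], hfg⟩
  · rintro _ ⟨g, hg, rfl, hfg⟩
    obtain ⟨b, hb, hbg⟩ := exists_mem_excessDegrees_le hsym hconn hg hfg
    linarith [ha.2 hb]

lemma sub_mem_excessDegrees_canonical_sub (hsym : ∀ u v, m u v = m v u) (hloop : Loopless m)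
    {mG : ℕ} (hmG : 2 * mG = ∑ u, ∑ v, m u v) {a : ℤ} (ha : a ∈ excessDegrees m f) :
    a - (degSum f - (mG - Fintype.card V)) ∈ excessDegrees m (canonical m - f) := by
  obtain ⟨t, ht, f', hff', rfl⟩ := ha
  refine ⟨-t, neg_injective.comp ht, _, hff'.sub_left (canonical m), ?_⟩
  rw [orientDiv_neg hsym hloop ht, sub_sub_sub_cancel_left, ← neg_sub f', degSum_posPart_neg,
    degSum_sub, hff'.degSum_eq, degSum_orientDiv hsym hloop ht hmG]

lemma isLeast_excessDegrees_canonical_sub (hsym : ∀ u v, m u v = m v u) (hloop : Loopless m)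
    {mG : ℕ} (hmG : 2 * mG = ∑ u, ∑ v, m u v) {a : ℤ} (ha : IsLeast (excessDegrees m f) a) :
    IsLeast (excessDegrees m (canonical m - f)) (a - (degSum f - (mG - Fintype.card V))) := by
  refine ⟨sub_mem_excessDegrees_canonical_sub hsym hloop hmG ha.1, fun b hb => ?_⟩
  have hback := sub_mem_excessDegrees_canonical_sub hsym hloop hmG hb
  rw [sub_sub_cancel] at hback
  have := ha.2 hback
  rw [degSum_sub, degSum_canonical hmG] at this
  linarith

end RankFormula

theorem riemann_roch_for_graphs_general
    {V : Type} [Fintype V] [Nonempty V]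
    (m : V → V → ℕ)
    (hsym : ∀ u v, m u v = m v u)
    (hloop : Loopless m)
    (hconn : StronglyConnected m)
    (mG : ℕ) (hmG : 2 * mG = ∑ u, ∑ v, m u v)
    (f : V → ℤ) :
    divRank m f - divRank m (fun v => (outdeg m v - 2) - f v)
      = degSum f - ((mG : ℤ) - (Fintype.card V : ℤ) + 1) + 1 := by
  obtain ⟨a, ha⟩ := exists_isLeast_excessDegrees m f
  change divRank m f - divRank m (canonical m - f) = _
  rw [divRank_eq_of_isLeast hsym hconn ha,
    divRank_eq_of_isLeast hsym hconn (isLeast_excessDegrees_canonical_sub hsym hloop hmG ha)]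
  ring

/-- **Riemann–Roch theorem for graphs** (Baker–Norine).
For an undirected graph `G` (a finite connected loopless multigraph, identified with
the bidirected digraph `m` with `m u v = m v u`) and any divisor `f`,
`rank(f) - rank(K_G - f) = deg(f) - g + 1`, where `g = m(G) - |V| + 1` and
`K_G(v) = d(v) - 2`. -/
theorem riemann_roch_for_graphs
    {V : Type} [Fintype V] [DecidableEq V] [Nonempty V]
    (m : V → V → ℕ)
    (hsym : ∀ u v, m u v = m v u)
    (hloop : Loopless m)
    (hconn : StronglyConnected m)
    (mG : ℕ) (hmG : 2 * mG = ∑ u, ∑ v, m u v)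
    (f : V → ℤ) :
    divRank m f - divRank m (fun v => (outdeg m v - 2) - f v)
      = degSum f - ((mG : ℤ) - (Fintype.card V : ℤ) + 1) + 1 :=
  riemann_roch_for_graphs_general m hsym hloop hconn mG hmG f
end

section
/- Let G be a digraph (a finite strongly connected loopless directed multigraph) and let x be a chip-distribution on G. Then either every legal chip-firing game starting from x can be continued indefinitely, or every legal game starting from x terminates after the same number of moves with the same final distribution; moreover, in the terminating case, the number of times each given vertex is fired is the same in every maximal legal game. -/
open Finset

variable {V : Type} [Fintype V] [DecidableEq V]

/-- The result of firing a finite sequence (list) of vertices, in order, starting from `x`. -/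
def runList (m : V → V → ℕ) : (V → ℤ) → List V → (V → ℤ)
  | x, [] => x
  | x, v :: l => runList m (fire m x v) l

/-- The list `s` of fired vertices is a legal game starting from `x`:
every firing is legal (the fired vertex is active). -/
def LegalList (m : V → V → ℕ) : (V → ℤ) → List V → Prop
  | _, [] => True
  | x, v :: l => outdeg m v ≤ x v ∧ LegalList m (fire m x v) l

/-!
Firings commute, and firing some other vertex never removes chips from `v`, so a vertex that is
active stays active until it is fired. Hence every legal game `s` is exchangeable into any
legal game `t` that ends with no active vertex: the first move `v` of `s` must occur in `t`
(otherwise `v` would still be active at the end of `t`), and it can be moved to the front of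
`t`. By induction, `s` is a sub-multiset of `t`; two maximal legal games are then
permutations of each other, and permuting the firings does not change the final distribution.
-/

open List

lemma fire_comm (m : V → V → ℕ) (x : V → ℤ) (v w : V) :
    fire m (fire m x v) w = fire m (fire m x w) v := by
  funext u
  simp only [fire]
  ring

lemma le_fire_of_ne (m : V → V → ℕ) (x : V → ℤ) {v w : V} (h : w ≠ v) :
    x v ≤ fire m x w v := by
  simp only [fire, if_neg h.symm]
  omega

lemma runList_perm (m : V → V → ℕ) {s t : List V} (h : s ~ t) (x : V → ℤ) :
    runList m x s = runList m x t := by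
  induction h generalizing x with
  | nil => rfl
  | cons v _ ih => exact ih _
  | swap v w l => exact congrArg (runList m · l) (fire_comm m x w v)
  | trans _ _ ih₁ ih₂ => exact (ih₁ x).trans (ih₂ x)

lemma le_runList_of_not_mem (m : V → V → ℕ) {v : V} :
    ∀ {t : List V} (x : V → ℤ), v ∉ t → x v ≤ runList m x t v
  | [], _, _ => le_rfl
  | w :: _, x, hv =>
    (le_fire_of_ne m x (ne_of_mem_of_not_mem mem_cons_self hv)).trans
      (le_runList_of_not_mem m _ fun h => hv (mem_cons_of_mem w h))

lemma LegalList.exists_perm_cons (m : V → V → ℕ) {v : V} :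
    ∀ {t : List V} {x : V → ℤ}, LegalList m x t → v ∈ t → outdeg m v ≤ x v →
      ∃ t', LegalList m (fire m x v) t' ∧ t ~ v :: t'
  | [], _, _, hv, _ => absurd hv not_mem_nil
  | w :: t, x, ⟨hw, ht⟩, hvt, hv => by
    by_cases hwv : w = v
    · subst hwv
      exact ⟨t, ht, Perm.refl _⟩
    have hvt' : v ∈ t := (mem_cons.mp hvt).resolve_left (Ne.symm hwv)
    obtain ⟨t', ht', hperm⟩ :=
      ht.exists_perm_cons m hvt' (hv.trans (le_fire_of_ne m x hwv))
    refine ⟨w :: t', ⟨hw.trans (le_fire_of_ne m x (Ne.symm hwv)), ?_⟩, ?_⟩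
    · rwa [fire_comm]
    · exact (hperm.cons w).trans (Perm.swap v w t')

lemma LegalList.subperm_of_stable (m : V → V → ℕ) :
    ∀ {s t : List V} {x : V → ℤ}, LegalList m x s → LegalList m x t →
      (∀ v, runList m x t v < outdeg m v) → s <+~ t
  | [], _, _, _, _, _ => nil_subperm
  | v :: s, t, x, ⟨hv, hs⟩, ht, hstable => by
    have hvt : v ∈ t := by
      by_contra hvt
      exact (hstable v).not_ge (hv.trans (le_runList_of_not_mem m x hvt))
    obtain ⟨t', ht', hperm⟩ := ht.exists_perm_cons m hvt hv
    have hstable' : ∀ u, runList m x (v :: t') u < outdeg m u := runList_perm m hperm x ▸ hstable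
    exact ((subperm_cons v).mpr (hs.subperm_of_stable m ht' hstable')).trans hperm.symm.subperm

theorem chip_firing_dichotomy_general
    {V : Type} [Fintype V] [DecidableEq V]
    (m : V → V → ℕ)
    (x : V → ℤ) :
    (∀ s : List V, LegalList m x s → ∃ v, outdeg m v ≤ runList m x s v)
    ∨ (∀ s t : List V, LegalList m x s → LegalList m x t →
        (∀ v, runList m x s v < outdeg m v) → (∀ v, runList m x t v < outdeg m v) →
        s.length = t.length ∧ runList m x s = runList m x t ∧ ∀ v, s.count v = t.count v) := by
  refine Or.inr fun s t hs ht hs_stable ht_stable => ?_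
  have hperm : s ~ t :=
    (hs.subperm_of_stable m ht ht_stable).antisymm (ht.subperm_of_stable m hs hs_stable)
  exact ⟨hperm.length_eq, runList_perm m hperm x, fun v => hperm.count_eq v⟩

/-- **Björner–Lovász**: starting from any chip-distribution `x` on a strongly connected
digraph, either every legal game can be continued (hence indefinitely), or every maximal
legal game (one ending with no active vertex) has the same length, the same final
distribution, and fires each vertex the same number of times. -/
theorem chip_firing_dichotomy
    {V : Type} [Fintype V] [DecidableEq V] [Nonempty V]
    (m : V → V → ℕ) (hloop : Loopless m) (hconn : StronglyConnected m)
    (x : V → ℤ) :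
    (∀ s : List V, LegalList m x s → ∃ v, outdeg m v ≤ runList m x s v)
    ∨ (∀ s t : List V, LegalList m x s → LegalList m x t →
        (∀ v, runList m x s v < outdeg m v) → (∀ v, runList m x t v < outdeg m v) →
        s.length = t.length ∧ runList m x s = runList m x t ∧ ∀ v, s.count v = t.count v) :=
  chip_firing_dichotomy_general m x
end

section
/- On a strongly connected digraph G, in any infinite legal chip-firing game every vertex is fired infinitely often. -/
open Finset

variable {V : Type} [Fintype V] [DecidableEq V]

/-!
Chips are conserved, and in a loopless game no vertex ever drops below `min 0 (x u)`, so every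
vertex holds a bounded number of chips. If `a` fires infinitely often and `a → b` is an edge
while `b` eventually stops firing, then from that time on the chips on `b` never decrease and
grow with every firing of `a`, which is impossible. Hence the vertices fired infinitely often
are closed under out-neighbours; some vertex is fired infinitely often, and by strong
connectivity it reaches every vertex.
-/

open Filter

lemma degSum_fire (m : V → V → ℕ) (x : V → ℤ) (v : V) :
    degSum (fire m x v) = degSum x := by
  unfold degSum fire outdeg
  rw [sum_sub_distrib, sum_add_distrib, sum_ite_eq' univ v]
  simp

lemma degSum_gameState (m : V → V → ℕ) (x : V → ℤ) (s : ℕ → V) (n : ℕ) :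
    degSum (gameState m x s n) = degSum x := by
  induction n with
  | zero => rfl
  | succ n ih => rw [gameState, degSum_fire, ih]

lemma gameState_succ_of_ne (m : V → V → ℕ) (x : V → ℤ) (s : ℕ → V) {n : ℕ} {u : V}
    (hu : u ≠ s n) : gameState m x s (n + 1) u = gameState m x s n u + m (s n) u := by
  simp [gameState, fire, hu]

namespace InfGame

variable {m : V → V → ℕ} {x : V → ℤ} {s : ℕ → V}

lemma min_zero_le_gameState (hs : InfGame m x s) (hloop : Loopless m) (n : ℕ) (u : V) :
    min 0 (x u) ≤ gameState m x s n u := by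
  induction n with
  | zero => exact min_le_right _ _
  | succ n ih =>
    by_cases hu : u = s n
    · subst hu
      have hfire : gameState m x s (n + 1) (s n) = gameState m x s n (s n) - outdeg m (s n) := by
        simp [gameState, fire, hloop (s n)]
      linarith [hs n, min_le_left 0 (x (s n))]
    · rw [gameState_succ_of_ne m x s hu]
      linarith [Int.natCast_nonneg (m (s n) u)]

lemma gameState_le (hs : InfGame m x s) (hloop : Loopless m) (n : ℕ) (u : V) :
    gameState m x s n u ≤ degSum x - ∑ w ∈ univ.erase u, min 0 (x w) := by
  have hsplit : gameState m x s n u + ∑ w ∈ univ.erase u, gameState m x s n w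
      = degSum x := by
    rw [add_sum_erase _ _ (mem_univ u), ← degSum_gameState m x s n, degSum]
  have hothers : ∑ w ∈ univ.erase u, min 0 (x w)
      ≤ ∑ w ∈ univ.erase u, gameState m x s n w :=
    sum_le_sum fun w _ => hs.min_zero_le_gameState hloop n w
  linarith

lemma frequently_fired_of_edge (hs : InfGame m x s) (hloop : Loopless m) {a b : V}
    (hab : 0 < m a b) (ha : ∃ᶠ n in atTop, s n = a) : ∃ᶠ n in atTop, s n = b := by
  by_contra hb
  obtain ⟨T, hT⟩ := eventually_atTop.mp (not_frequently.mp hb)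
  set f : ℕ → ℤ := fun k => gameState m x s (T + k) b
  have hf_succ : ∀ k, s (T + k) ≠ b → f (k + 1) = f k + m (s (T + k)) b := fun k hk =>
    gameState_succ_of_ne m x s (Ne.symm hk)
  have hf_mono : Monotone f := monotone_nat_of_le_succ fun k => by
    rw [hf_succ k (hT _ (by omega))]
    linarith [Int.natCast_nonneg (m (s (T + k)) b)]
  obtain ⟨M, ⟨k₀, hk₀⟩, hM⟩ := Int.exists_greatest_of_bdd (P := (· ∈ Set.range f))
    ⟨_, by rintro _ ⟨k, rfl⟩; exact hs.gameState_le hloop (T + k) b⟩ ⟨f 0, 0, rfl⟩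
  obtain ⟨n, hn, hsn⟩ := frequently_atTop.mp ha (T + k₀)
  obtain ⟨k, rfl⟩ : ∃ k, n = T + k := ⟨n - T, by omega⟩
  have hgrow : f k + 1 ≤ f (k + 1) := by
    rw [hf_succ k (hT _ (by omega)), hsn]
    linarith [(Int.natCast_pos.mpr hab : (0 : ℤ) < m a b)]
  linarith [hf_mono (show k₀ ≤ k by omega), hM (f (k + 1)) ⟨k + 1, rfl⟩]

lemma frequently_fired_of_reachable (hs : InfGame m x s) (hloop : Loopless m) {a b : V}
    (hab : Relation.ReflTransGen (fun a b => 0 < m a b) a b) (ha : ∃ᶠ n in atTop, s n = a) :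
    ∃ᶠ n in atTop, s n = b := by
  induction hab with
  | refl => exact ha
  | tail _ hcd ih => exact hs.frequently_fired_of_edge hloop hcd ih

end InfGame

lemma exists_frequently_fired {α : Type*} [Finite α] (s : ℕ → α) :
    ∃ u, ∃ᶠ n in atTop, s n = u := by
  obtain ⟨u, hu⟩ := Finite.exists_infinite_fiber s
  exact ⟨u, Nat.frequently_atTop_iff_infinite.mpr (Set.infinite_coe_iff.mp hu)⟩

theorem every_vertex_fires_infinitely_often_general
    {V : Type} [Fintype V] [DecidableEq V]
    (m : V → V → ℕ) (hloop : Loopless m) (hconn : StronglyConnected m)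
    (x : V → ℤ) (s : ℕ → V) (hs : InfGame m x s) (v : V) (N : ℕ) :
    ∃ n, N ≤ n ∧ s n = v := by
  obtain ⟨u, hu⟩ := exists_frequently_fired s
  exact frequently_atTop.mp (hs.frequently_fired_of_reachable hloop (hconn u v) hu) N

/-- On a strongly connected digraph, in any infinite legal chip-firing game every vertex
is fired infinitely often. -/
theorem every_vertex_fires_infinitely_often
    {V : Type} [Fintype V] [DecidableEq V] [Nonempty V]
    (m : V → V → ℕ) (hloop : Loopless m) (hconn : StronglyConnected m)
    (x : V → ℤ) (s : ℕ → V) (hs : InfGame m x s) (v : V) (N : ℕ) :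
    ∃ n, N ≤ n ∧ s n = v :=
  every_vertex_fires_infinitely_often_general m hloop hconn x s hs v N
end

section
/- Let G be a strongly connected digraph. A chip-distribution x on G is terminating if and only if the divisor d⁺ − 1 − x (where d⁺ is the outdegree vector and 1 is the all-ones vector) is equi-effective, i.e., there exists y : V → ℤ with y ≥ 0 and y ∼ d⁺ − 1 − x. -/
/-!
Both sides say that `x + L z` is stable (fewer than `d⁺ v` chips at every `v`) for some `z`:
`y = d⁺ - 1 - x + L z'` is effective iff `x - L z'` is stable.

If no configuration `x + L z` is stable, firing an active vertex forever is a legal game.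
Conversely, let `x + L z` be stable. For any kernel vector `q` of `L`, the triangle inequality
gives `L |q| ≥ 0`, and the entries of `L w` always sum to zero, so `L |q| = 0`; by strong
connectivity `|q|` is then positive. Adding a large multiple of it makes `z ≥ 0`, and by the
least action principle no legal game fires a vertex `v` more than `z v` times, so every legal
game has at most `∑ v, z v` steps.
-/


open Finset

variable {V : Type} [Fintype V] [DecidableEq V]

set_option linter.unusedSectionVars false

namespace ChipFiring

open Matrix

variable {m : V → V → ℕ}

section Laplacian

theorem outdeg_nonneg (v : V) : 0 ≤ outdeg m v :=
  Finset.sum_nonneg fun _ _ => Int.natCast_nonneg _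

variable (m) in
def lapMatrix : Matrix V V ℤ :=
  Matrix.of (fun u v => (m v u : ℤ)) - Matrix.diagonal (outdeg m)

theorem lapMatrix_mulVec (z : V → ℤ) : lapMatrix m *ᵥ z = lap m z := by
  ext u
  rw [lapMatrix, sub_mulVec, Pi.sub_apply, mulVec_diagonal]
  rfl

theorem lap_add (z w : V → ℤ) : lap m (z + w) = lap m z + lap m w := by
  simp only [← lapMatrix_mulVec, mulVec_add]

theorem lap_neg (z : V → ℤ) : lap m (-z) = -lap m z := by
  simp only [← lapMatrix_mulVec, mulVec_neg]

theorem lap_smul (c : ℤ) (z : V → ℤ) : lap m (c • z) = c • lap m z := by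
  simp only [← lapMatrix_mulVec, mulVec_smul]

theorem lap_zero : lap m 0 = 0 := by
  simp only [← lapMatrix_mulVec, mulVec_zero]

theorem fire_eq_add_lap (c : V → ℤ) (v : V) : fire m c v = c + lap m (Pi.single v 1) := by
  ext u
  by_cases h : u = v
  · subst h
    simp [fire, lap, Pi.single_apply]
    ring
  · simp [fire, lap, Pi.single_apply, h]

theorem one_vecMul_lapMatrix : 1 ᵥ* lapMatrix m = 0 := by
  ext v
  rw [lapMatrix, vecMul_sub, Pi.sub_apply, vecMul_diagonal]
  simp [vecMul, dotProduct, outdeg]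

theorem sum_lap (z : V → ℤ) : ∑ u, lap m z u = 0 := by
  simpa [← lapMatrix_mulVec, dotProduct, one_vecMul_lapMatrix] using
    dotProduct_mulVec 1 (lapMatrix m) z

theorem sum_mul_eq_outdeg_mul_of_lap_eq_zero {q : V → ℤ} (hq : lap m q = 0) (u : V) :
    ∑ v, (m v u : ℤ) * q v = outdeg m u * q u :=
  sub_eq_zero.mp (congrFun hq u)

theorem lap_le_lap_of_le_of_eq {a b : V → ℤ} {v : V} (hab : a ≤ b) (hv : a v = b v) :
    lap m a v ≤ lap m b v := by
  simp only [lap, hv]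
  gcongr with u
  exact hab u

end Laplacian

section Kernel

theorem exists_lap_eq_zero_ne_zero [Nonempty V] : ∃ q ≠ 0, lap m q = 0 := by
  have hdet : (lapMatrix m).det = 0 :=
    exists_vecMul_eq_zero_iff.mp ⟨1, one_ne_zero, one_vecMul_lapMatrix⟩
  simpa [lapMatrix_mulVec] using exists_mulVec_eq_zero_iff.mpr hdet

theorem lap_abs_eq_zero {q : V → ℤ} (hq : lap m q = 0) : lap m |q| = 0 := by
  have hnonneg : ∀ u, 0 ≤ lap m |q| u := by
    intro u
    have key : |outdeg m u * q u| ≤ ∑ v, (m v u : ℤ) * |q v| := by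
      rw [← sum_mul_eq_outdeg_mul_of_lap_eq_zero hq]
      refine (Finset.abs_sum_le_sum_abs _ _).trans_eq (Finset.sum_congr rfl fun v _ => ?_)
      rw [abs_mul, Nat.abs_cast]
    rw [abs_mul, abs_of_nonneg (outdeg_nonneg u)] at key
    simpa [lap, sub_nonneg] using key
  ext u
  exact (Finset.sum_eq_zero_iff_of_nonneg fun v _ => hnonneg v).mp (sum_lap _) u
    (Finset.mem_univ u)

theorem pos_of_lap_eq_zero (hconn : StronglyConnected m) {p : V → ℤ} (hp0 : 0 ≤ p)
    (hp : p ≠ 0) (hlap : lap m p = 0) (v : V) : 0 < p v := by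
  obtain ⟨v₀, hv₀⟩ : ∃ v₀, p v₀ ≠ 0 := Function.ne_iff.mp hp
  induction hconn v₀ v with
  | refl => exact (hp0 v₀).lt_of_ne' hv₀
  | @tail b c _ hbc ih =>
    have hb : 0 < (m b c : ℤ) * p b := mul_pos (by exact_mod_cast hbc) ih
    have hsum : (m b c : ℤ) * p b ≤ ∑ w, (m w c : ℤ) * p w :=
      Finset.single_le_sum (fun w _ => mul_nonneg (Int.natCast_nonneg _) (hp0 w))
        (Finset.mem_univ b)
    rw [sum_mul_eq_outdeg_mul_of_lap_eq_zero hlap c] at hsum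
    exact pos_of_mul_pos_right (hb.trans_le hsum) (outdeg_nonneg c)

theorem exists_pos_lap_eq_zero [Nonempty V] (hconn : StronglyConnected m) :
    ∃ p : V → ℤ, (∀ v, 0 < p v) ∧ lap m p = 0 := by
  obtain ⟨q, hq0, hq⟩ := exists_lap_eq_zero_ne_zero (m := m)
  have habs : |q| ≠ 0 := fun h => hq0 (funext fun v => abs_eq_zero.mp (congrFun h v))
  exact ⟨|q|, pos_of_lap_eq_zero hconn (abs_nonneg q) habs (lap_abs_eq_zero hq),
    lap_abs_eq_zero hq⟩

theorem exists_ge_lap_eq_zero [Nonempty V] (hconn : StronglyConnected m) (z : V → ℤ) :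
    ∃ p : V → ℤ, z ≤ p ∧ lap m p = 0 := by
  obtain ⟨p, hpos, hp⟩ := exists_pos_lap_eq_zero hconn
  refine ⟨(∑ v, |z v|) • p, fun v => ?_, by rw [lap_smul, hp, smul_zero]⟩
  calc z v ≤ ∑ w, |z w| := (le_abs_self _).trans
          (Finset.single_le_sum (fun w _ => abs_nonneg (z w)) (Finset.mem_univ v))
    _ ≤ (∑ w, |z w|) * p v :=
          le_mul_of_one_le_right (Finset.sum_nonneg fun w _ => abs_nonneg _) (hpos v)

end Kernel

section Game

variable (m) in
def IsStable (c : V → ℤ) : Prop := ∀ v, c v < outdeg m v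

def firingCount (s : ℕ → V) : ℕ → V → ℤ
  | 0 => 0
  | n + 1 => firingCount s n + Pi.single (s n) 1

theorem gameState_eq_add_lap (x : V → ℤ) (s : ℕ → V) (n : ℕ) :
    gameState m x s n = x + lap m (firingCount s n) := by
  induction n with
  | zero => simp [gameState, firingCount, lap_zero]
  | succ n ih => rw [gameState, ih, fire_eq_add_lap, firingCount, lap_add, add_assoc]

theorem sum_firingCount (s : ℕ → V) (n : ℕ) : ∑ v, firingCount s n v = n := by
  induction n with
  | zero => simp [firingCount]
  | succ n ih => simp [firingCount, Finset.sum_add_distrib, ih]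

/-- At the first firing that would exceed `z`, the firing vertex `v` has fired exactly `z v`
times and every vertex at most `z` times, so it holds at most `(x + L z) v < d⁺ v` chips. -/
theorem firingCount_le {x z : V → ℤ} (hz : 0 ≤ z) (hstable : IsStable m (x + lap m z))
    {s : ℕ → V} (hs : InfGame m x s) (n : ℕ) : firingCount s n ≤ z := by
  induction n with
  | zero => exact hz
  | succ n ih =>
    have hlt : firingCount s n (s n) < z (s n) := by
      refine (ih (s n)).lt_of_ne fun heq => ?_
      have hlegal := hs n
      rw [gameState_eq_add_lap] at hlegal
      have hle := lap_le_lap_of_le_of_eq (m := m) ih heq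
      have hst := hstable (s n)
      simp only [Pi.add_apply] at hlegal hst
      omega
    intro v
    rw [firingCount, Pi.add_apply, Pi.single_apply]
    split_ifs with h
    · subst h
      exact Int.add_one_le_of_lt hlt
    · simpa using ih v

theorem not_infGame_of_isStable {x z : V → ℤ} (hz : 0 ≤ z) (hstable : IsStable m (x + lap m z))
    (s : ℕ → V) : ¬ InfGame m x s := by
  intro hs
  have h := Finset.sum_le_sum (s := Finset.univ) fun v _ =>
    firingCount_le hz hstable hs ((∑ v, z v).toNat + 1) v
  rw [sum_firingCount] at h
  omega

theorem terminating_of_isStable (hconn : StronglyConnected m) {x z : V → ℤ}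
    (hstable : IsStable m (x + lap m z)) : Terminating m x := by
  rintro ⟨s, hs⟩
  have : Nonempty V := ⟨s 0⟩
  obtain ⟨p, hzp, hp⟩ := exists_ge_lap_eq_zero hconn (-z)
  refine not_infGame_of_isStable (z := z + p) (fun v => ?_) ?_ s hs
  · simpa [neg_le_iff_add_nonneg'] using hzp v
  · simpa [lap_add, hp] using hstable

theorem exists_infGame_of_forall_active {x : V → ℤ}
    (hactive : ∀ z : V → ℤ, ∃ v, outdeg m v ≤ x v + lap m z v) : ∃ s, InfGame m x s := by
  choose next hnext using hactive
  let counts : ℕ → V → ℤ := fun n => (fun z => z + Pi.single (next z) 1)^[n] 0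
  have hstate : ∀ n, gameState m x (fun n => next (counts n)) n = x + lap m (counts n) := by
    intro n
    induction n with
    | zero => simp [gameState, counts, lap_zero]
    | succ n ih =>
      rw [gameState, ih, fire_eq_add_lap, add_assoc, ← lap_add]
      simp only [counts, Function.iterate_succ_apply']
  exact ⟨fun n => next (counts n), fun n => (hstate n).symm ▸ hnext (counts n)⟩

theorem exists_isStable_of_terminating {x : V → ℤ} (h : Terminating m x) :
    ∃ z, IsStable m (x + lap m z) := by
  by_contra! hactive
  refine h (exists_infGame_of_forall_active fun z => ?_)
  simpa [IsStable] using hactive z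

theorem exists_nonneg_linEquiv_iff (x : V → ℤ) :
    (∃ y : V → ℤ, 0 ≤ y ∧ LinEquiv m y (fun v => outdeg m v - 1 - x v)) ↔
      ∃ z, IsStable m (x + lap m z) := by
  constructor
  · rintro ⟨y, hy, z, rfl⟩
    refine ⟨-z, fun v => ?_⟩
    have := hy v
    simp only [lap_neg, Pi.add_apply, Pi.neg_apply, Pi.zero_apply] at this ⊢
    omega
  · rintro ⟨z, hz⟩
    refine ⟨fun v => outdeg m v - 1 - x v - lap m z v, fun v => ?_, -z, ?_⟩
    · have := hz v
      simp only [Pi.add_apply, Pi.zero_apply] at this ⊢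
      omega
    · ext v
      simp only [lap_neg, Pi.add_apply, Pi.neg_apply]
      ring

end Game

end ChipFiring

theorem terminating_iff_dual_equi_effective_general
    {V : Type} [Fintype V] [DecidableEq V]
    (m : V → V → ℕ) (hconn : StronglyConnected m)
    (x : V → ℤ) :
    Terminating m x ↔
      ∃ y : V → ℤ, 0 ≤ y ∧ LinEquiv m y (fun v => outdeg m v - 1 - x v) := by
  rw [ChipFiring.exists_nonneg_linEquiv_iff]
  exact ⟨ChipFiring.exists_isStable_of_terminating,
    fun ⟨_, hz⟩ => ChipFiring.terminating_of_isStable hconn hz⟩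

/-- On a strongly connected digraph, a chip-distribution `x` is terminating if and only if
the divisor `d⁺ - 1 - x` is equi-effective. -/
theorem terminating_iff_dual_equi_effective
    {V : Type} [Fintype V] [DecidableEq V] [Nonempty V]
    (m : V → V → ℕ) (hloop : Loopless m) (hconn : StronglyConnected m)
    (x : V → ℤ) :
    Terminating m x ↔
      ∃ y : V → ℤ, 0 ≤ y ∧ LinEquiv m y (fun v => outdeg m v - 1 - x v) :=
  terminating_iff_dual_equi_effective_general m hconn x
end

section
/- Let G be a digraph (finite loopless directed multigraph). Every inclusion-minimal feedback arc set of G is also a turnback arc set of G; that is, if F is a set of edges such that deleting F makes G acyclic but deleting any proper subset of F does not, then reversing the edges of F in G yields an acyclic digraph. -/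
open Finset

variable {V : Type} [Fintype V] [DecidableEq V]

/-- A multidigraph (given by its multiplicity function) is acyclic if it has no directed cycle,
i.e. no vertex can reach itself by a directed walk of positive length. -/
def AcyclicMul (k : V → V → ℕ) : Prop :=
  ∀ v : V, ¬ Relation.TransGen (fun a b => 0 < k a b) v v

/-!
For each edge `u → v` of a minimal feedback arc set `F`, putting that one edge back into `G − F`
creates a cycle, which must run through `u → v`; so `G − F` contains a path from `v` to `u`.
Hence every edge of the digraph obtained by reversing `F` can be replaced by a nonempty path of
`G − F` with the same endpoints (looplessness rules out the empty one), and a cycle after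
reversal would give a cycle in the acyclic digraph `G − F`.
-/

namespace Relation

variable {α : Type*} {r : α → α → Prop} {u v : α}

theorem reflTransGen_or_of_reflTransGen_or_edge (hvu : ¬ ReflTransGen r v u) {a b : α}
    (h : ReflTransGen (fun x y => r x y ∨ x = u ∧ y = v) a b) :
    ReflTransGen r a b ∨ ReflTransGen r a u ∧ ReflTransGen r v b := by
  induction h with
  | refl => exact .inl .refl
  | tail _ hcb ih =>
    rcases hcb with hcb | ⟨rfl, rfl⟩
    · exact ih.imp (·.tail hcb) fun ⟨hau, hvc⟩ => ⟨hau, hvc.tail hcb⟩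
    · rcases ih with hau | ⟨_, hvu'⟩
      · exact .inr ⟨hau, .refl⟩
      · exact absurd hvu' hvu

theorem reflTransGen_of_transGen_or_edge_self (hr : ∀ w, ¬ TransGen r w w) {w : α}
    (h : TransGen (fun x y => r x y ∨ x = u ∧ y = v) w w) : ReflTransGen r v u := by
  by_contra hvu
  obtain ⟨c, hwc, hcw⟩ := TransGen.tail'_iff.mp h
  rcases hcw with hcw | ⟨rfl, rfl⟩
  · rcases reflTransGen_or_of_reflTransGen_or_edge hvu hwc with hwc | ⟨hwu, hvc⟩
    · exact hr w (TransGen.tail' hwc hcw)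
    · exact hvu ((hvc.tail hcw).trans hwu)
  · rcases reflTransGen_or_of_reflTransGen_or_edge hvu hwc with hvu' | ⟨hvu', -⟩ <;>
      exact hvu hvu'

end Relation

open Relation

section MinimalFeedbackArcSet

variable {α : Type} {m F : α → α → ℕ}

def IsMinimalFeedbackArcSet (m F : α → α → ℕ) : Prop :=
  AcyclicMul (fun a b => m a b - F a b) ∧
    ∀ F' : α → α → ℕ, (∀ a b, F' a b ≤ F a b) → F' ≠ F → ¬ AcyclicMul (fun a b => m a b - F' a b)

theorem IsMinimalFeedbackArcSet.reflTransGen_of_pos (hF : IsMinimalFeedbackArcSet m F)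
    {u v : α} (huv : 0 < F u v) : ReflTransGen (fun a b => 0 < m a b - F a b) v u := by
  classical
  let F' : α → α → ℕ := fun a b => if a = u ∧ b = v then F u v - 1 else F a b
  have hF'_le : ∀ a b, F' a b ≤ F a b := fun a b => by
    simp only [F']
    split_ifs with h
    · rw [h.1, h.2]
      omega
    · rfl
  have hF'_ne : F' ≠ F := fun h => by
    have := congrFun (congrFun h u) v
    simp only [F', and_self, if_true] at this
    omega
  have hedges : ∀ a b, 0 < m a b - F' a b → 0 < m a b - F a b ∨ a = u ∧ b = v := by
    intro a b hab
    by_cases h : a = u ∧ b = v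
    · exact .inr h
    · simp only [F', if_neg h] at hab
      exact .inl hab
  by_contra hvu
  refine hF.2 F' hF'_le hF'_ne fun w hw => hvu ?_
  exact reflTransGen_of_transGen_or_edge_self hF.1 (TransGen.mono hedges _ _ hw)

theorem IsMinimalFeedbackArcSet.transGen_of_pos_reverse (hF : IsMinimalFeedbackArcSet m F)
    (hloop : Loopless m) (hFm : ∀ a b, F a b ≤ m a b) {a b : α}
    (hab : 0 < m a b - F a b + F b a) : TransGen (fun a b => 0 < m a b - F a b) a b := by
  by_cases hkept : 0 < m a b - F a b
  · exact .single hkept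
  have hne : a ≠ b := by
    rintro rfl
    have := hloop a
    have := hFm a a
    omega
  have hpath := hF.reflTransGen_of_pos (u := b) (v := a) (by omega)
  exact (reflTransGen_iff_eq_or_transGen.mp hpath).resolve_left hne.symm

end MinimalFeedbackArcSet

theorem minimal_fas_is_turnback_general
    {V : Type}
    (m : V → V → ℕ) (hloop : Loopless m)
    (F : V → V → ℕ) (hF : ∀ u v, F u v ≤ m u v)
    (hfas : AcyclicMul (fun u v => m u v - F u v))
    (hmin : ∀ F' : V → V → ℕ, (∀ u v, F' u v ≤ F u v) → F' ≠ F →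
        ¬ AcyclicMul (fun u v => m u v - F' u v)) :
    AcyclicMul (fun u v => m u v - F u v + F v u) := by
  have hminimal : IsMinimalFeedbackArcSet m F := ⟨hfas, hmin⟩
  intro w hw
  exact hfas w <| TransGen.closed (fun _ _ => hminimal.transGen_of_pos_reverse hloop hF) w w hw

/-- **Gallai**: an inclusion-minimal feedback arc set of a digraph is a turnback arc set:
if deleting `F` makes the digraph acyclic but deleting any proper subset of `F` does not,
then reversing the edges of `F` yields an acyclic digraph. -/
theorem minimal_fas_is_turnback
    {V : Type} [Fintype V] [DecidableEq V]
    (m : V → V → ℕ) (hloop : Loopless m)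
    (F : V → V → ℕ) (hF : ∀ u v, F u v ≤ m u v)
    (hfas : AcyclicMul (fun u v => m u v - F u v))
    (hmin : ∀ F' : V → V → ℕ, (∀ u v, F' u v ≤ F u v) → F' ≠ F →
        ¬ AcyclicMul (fun u v => m u v - F' u v)) :
    AcyclicMul (fun u v => m u v - F u v + F v u) :=
  minimal_fas_is_turnback_general m hloop F hF hfas hmin
end

section
/- Let G be an Eulerian digraph and let T ⊆ E(G) be a turnback arc set of G. Denote by d⁻_T(v) the indegree of vertex v in the digraph (V, T). Then every chip-distribution x on G satisfying x(v) ≥ d⁻_T(v) for every vertex v is non-terminating. -/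
open Finset

variable {V : Type} [Fintype V] [DecidableEq V]

/-!
Reversing the turnback arcs makes the digraph acyclic, so its vertices can be listed as
`v₀, …, vₙ₋₁` with every edge of `m` that is not in `T` pointing forward. Fire the vertices in
this order. When `vᵢ` fires it already holds the chips sent along the edges from `v₀, …, vᵢ₋₁`,
so it is short of `outdeg = indeg` by at most the edges from `vᵢ, …, vₙ₋₁`, all of which are in
`T`; hence `x ≥ d⁻_T` makes every firing legal. After one round every vertex has fired once, and
since the digraph is Eulerian the configuration is `x` again, so the round can be repeated
forever.
-/

section Acyclic

variable {α : Type} {k : α → α → ℕ}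

theorem AcyclicMul.exists_linearOrder (hk : AcyclicMul k) :
    ∃ _ : LinearOrder α, ∀ a b, 0 < k a b → a < b := by
  let R : α → α → Prop := fun a b => 0 < k a b
  have : IsPartialOrder α (Relation.ReflTransGen R) :=
    { antisymm := fun a b hab hba => by
        rcases Relation.reflTransGen_iff_eq_or_transGen.1 hab with h | h
        · exact h.symm
        · exact absurd (h.trans_left hba) (hk a) }
  obtain ⟨t, ht, hRt⟩ := extend_partialOrder (Relation.ReflTransGen R)
  let order : LinearOrder α :=
    { le := t
      le_refl := refl_of t
      le_trans := fun _ _ _ => trans_of t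
      le_antisymm := fun _ _ => antisymm_of t
      le_total := total_of t
      toDecidableLE := Classical.decRel _ }
  refine ⟨order, fun a b hab => lt_of_le_of_ne (hRt _ _ (.single hab)) ?_⟩
  rintro rfl
  exact hk a (.single hab)

theorem AcyclicMul.exists_equiv_fin [Fintype α] (hk : AcyclicMul k) :
    ∃ e : Fin (Fintype.card α) ≃ α, ∀ i j, 0 < k (e i) (e j) → i < j := by
  obtain ⟨_, hlt⟩ := hk.exists_linearOrder
  let e := monoEquivOfFin α rfl
  exact ⟨e.toEquiv, fun i j h => e.lt_iff_lt.1 (hlt _ _ h)⟩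

end Acyclic

section RoundRobin

variable {α : Type*} {n : ℕ} [NeZero n] (e : Fin n ≃ α)

def roundRobin (i : ℕ) : α := e (Fin.ofNat n i)

theorem roundRobin_of_lt {i : ℕ} (hi : i < n) : roundRobin e i = e ⟨i, hi⟩ := by
  simp only [roundRobin, Fin.ofNat, Nat.mod_eq_of_lt hi]

theorem roundRobin_add_left (i : ℕ) : roundRobin e (n + i) = roundRobin e i := by
  simp only [roundRobin, Fin.ofNat, Nat.add_mod_left]

theorem sum_range_roundRobin [Fintype α] {M : Type*} [AddCommMonoid M] (f : α → M) :
    ∑ j ∈ range n, f (roundRobin e j) = ∑ a, f a := by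
  rw [← Fin.sum_univ_eq_sum_range, ← e.sum_comp]
  exact sum_congr rfl fun i _ => by rw [roundRobin_of_lt e i.isLt]

end RoundRobin

section Game

variable (m : V → V → ℕ)

theorem gameState_apply (x : V → ℤ) (s : ℕ → V) (i : ℕ) (u : V) :
    gameState m x s i u = x u + ∑ j ∈ range i, (m (s j) u : ℤ)
      - ∑ j ∈ range i, if u = s j then outdeg m u else 0 := by
  induction i with
  | zero => simp [gameState]
  | succ i ih =>
    simp only [gameState, fire, sum_range_succ, ih]
    split_ifs with h
    · subst h
      ring
    · ring

variable {m}

theorem gameState_add_of_periodic {x : V → ℤ} {s : ℕ → V} {n : ℕ} (hs : ∀ i, s (n + i) = s i)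
    (hret : gameState m x s n = x) (i : ℕ) : gameState m x s (n + i) = gameState m x s i := by
  induction i with
  | zero => exact hret
  | succ i ih =>
    show fire m (gameState m x s (n + i)) (s (n + i)) = fire m (gameState m x s i) (s i)
    rw [ih, hs]

theorem infGame_of_periodic {x : V → ℤ} {s : ℕ → V} {n : ℕ} (hn : 0 < n)
    (hs : ∀ i, s (n + i) = s i) (hret : gameState m x s n = x)
    (hlegal : ∀ i < n, outdeg m (s i) ≤ gameState m x s i (s i)) : InfGame m x s := by
  intro i
  induction i using Nat.strong_induction_on with
  | _ i ih =>
    rcases lt_or_ge i n with hi | hi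
    · exact hlegal i hi
    · obtain ⟨j, rfl⟩ := Nat.exists_eq_add_of_le hi
      rw [hs, gameState_add_of_periodic hs hret]
      exact ih j (by omega)

variable {n : ℕ} [NeZero n] (e : Fin n ≃ V)

theorem gameState_roundRobin_self (heul : ∀ v, outdeg m v = indeg m v) (x : V → ℤ) :
    gameState m x (roundRobin e) n = x := by
  funext u
  rw [gameState_apply, sum_range_roundRobin e (fun v => (m v u : ℤ)),
    sum_range_roundRobin e (fun v => if u = v then outdeg m u else 0), ← indeg, heul]
  simp

theorem outdeg_le_gameState_roundRobin (heul : ∀ v, outdeg m v = indeg m v) {x : V → ℤ}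
    {i : ℕ} (hi : i < n)
    (hx : ∑ j ∈ Ico i n, (m (roundRobin e j) (roundRobin e i) : ℤ) ≤ x (roundRobin e i)) :
    outdeg m (roundRobin e i) ≤ gameState m x (roundRobin e) i (roundRobin e i) := by
  have hfirst : ∀ j ∈ range i, roundRobin e i ≠ roundRobin e j := fun j hj => by
    rw [mem_range] at hj
    rw [roundRobin_of_lt e hi, roundRobin_of_lt e (hj.trans hi), Ne, e.apply_eq_iff_eq,
      Fin.mk.injEq]
    exact hj.ne'
  have hindeg : outdeg m (roundRobin e i) =
      ∑ j ∈ range i, (m (roundRobin e j) (roundRobin e i) : ℤ)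
        + ∑ j ∈ Ico i n, (m (roundRobin e j) (roundRobin e i) : ℤ) := by
    rw [sum_range_add_sum_Ico _ hi.le, sum_range_roundRobin e (fun v => (m v _ : ℤ)), heul]
    rfl
  rw [gameState_apply, sum_eq_zero fun j hj => if_neg (hfirst j hj), hindeg]
  linarith

theorem infGame_roundRobin (heul : ∀ v, outdeg m v = indeg m v) {x : V → ℤ}
    (hx : ∀ i < n,
      ∑ j ∈ Ico i n, (m (roundRobin e j) (roundRobin e i) : ℤ) ≤ x (roundRobin e i)) :
    InfGame m x (roundRobin e) :=
  infGame_of_periodic (Nat.pos_of_ne_zero (NeZero.ne n)) (roundRobin_add_left e)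
    (gameState_roundRobin_self e heul x)
    fun i hi => outdeg_le_gameState_roundRobin e heul hi (hx i hi)

theorem infGame_roundRobin_of_backward_le (heul : ∀ v, outdeg m v = indeg m v)
    {T : V → V → ℕ} (hback : ∀ i j, i ≤ j → m (e j) (e i) ≤ T (e j) (e i)) {x : V → ℤ}
    (hx : ∀ v, ∑ u, (T u v : ℤ) ≤ x v) : InfGame m x (roundRobin e) := by
  refine infGame_roundRobin e heul fun i hi => ?_
  calc ∑ j ∈ Ico i n, (m (roundRobin e j) (roundRobin e i) : ℤ)
      ≤ ∑ j ∈ Ico i n, (T (roundRobin e j) (roundRobin e i) : ℤ) := by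
        refine sum_le_sum fun j hj => ?_
        rw [mem_Ico] at hj
        rw [roundRobin_of_lt e hi, roundRobin_of_lt e hj.2]
        exact_mod_cast hback _ _ (Fin.mk_le_mk.2 hj.1)
    _ ≤ ∑ j ∈ range n, (T (roundRobin e j) (roundRobin e i) : ℤ) :=
        sum_le_sum_of_subset_of_nonneg (fun j hj => mem_range.2 (mem_Ico.1 hj).2)
          fun _ _ _ => by positivity
    _ = ∑ u, (T u (roundRobin e i) : ℤ) := sum_range_roundRobin e (fun v => (T v _ : ℤ))
    _ ≤ x (roundRobin e i) := hx _

end Game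

theorem nonterminating_of_ge_turnback_indeg_general
    {V : Type} [Fintype V] [DecidableEq V] [Nonempty V]
    (m : V → V → ℕ)
    (heul : ∀ v, outdeg m v = indeg m v)
    (T : V → V → ℕ)
    (hTturn : AcyclicMul (fun u v => m u v - T u v + T v u))
    (x : V → ℤ) (hx : ∀ v, (∑ u, (T u v : ℤ)) ≤ x v) :
    ¬ Terminating m x := by
  obtain ⟨e, hforward⟩ := hTturn.exists_equiv_fin
  have hback : ∀ i j, i ≤ j → m (e j) (e i) ≤ T (e j) (e i) := fun i j hij =>
    not_lt.1 fun h => (hforward j i (by omega)).not_ge hij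
  exact fun hterm => hterm ⟨roundRobin e, infGame_roundRobin_of_backward_le e heul hback hx⟩

/-- On an Eulerian digraph, any chip-distribution dominating the indegree vector of a
turnback arc set is non-terminating. -/
theorem nonterminating_of_ge_turnback_indeg
    {V : Type} [Fintype V] [DecidableEq V] [Nonempty V]
    (m : V → V → ℕ) (hloop : Loopless m) (hconn : StronglyConnected m)
    (heul : ∀ v, outdeg m v = indeg m v)
    (T : V → V → ℕ) (hT : ∀ u v, T u v ≤ m u v)
    (hTturn : AcyclicMul (fun u v => m u v - T u v + T v u))
    (x : V → ℤ) (hx : ∀ v, (∑ u, (T u v : ℤ)) ≤ x v) :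
    ¬ Terminating m x :=
  nonterminating_of_ge_turnback_indeg_general m heul T hTturn x hx
end
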